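/- The Thue–Morse word contains no cube: there is no nonempty word u such that uuu is a factor of t. -/

import Mathlib

/-- The Thue–Morse word: bit `n` is the parity of the number of 1s in the
binary expansion of `n`. -/
def tm (n : ℕ) : Fin 2 := (Fin.ofNat 2 (Nat.digits 2 n).sum : Fin 2)

/-- A finite word `u` is a factor of the infinite word `w` if it occurs as a
contiguous subword of `w`. -/
def IsFactorOf {α : Type*} (u : List α) (w : ℕ → α) : Prop :=
  ∃ i : ℕ, u = (List.range u.length).map (fun j => w (i + j))

/-!
Thue–Morse satisfies `t(2a) = t(a)` and `t(2a+1) ≠ t(2a)`. A cube of even period `2m` at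
position `i` therefore restricts, on the even positions it covers, to a cube of period `m`
at position `⌈i/2⌉`, so by descent it suffices to exclude odd periods `p`. For those, every
position `y` in `[i, i + p)` has `y` or `y + p` even, so `t` alternates on `[i, i + p]`; as `p`
is odd this gives `t(i + p) ≠ t(i)`, against the period.
-/

/-- The factor of `w` of length `3 * p` starting at `i` has period `p`, i.e. is a cube. -/
def HasCubeAt {α : Type*} (w : ℕ → α) (i p : ℕ) : Prop :=
  ∀ j < 2 * p, w (i + j + p) = w (i + j)

lemma List.getElem?_append_append_self {α : Type*} (u : List α) {k : ℕ}
    (hk : k < 2 * u.length) : (u ++ u ++ u)[u.length + k]? = (u ++ u ++ u)[k]? := by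
  rw [List.append_assoc u u u, List.getElem?_append_right (by omega), Nat.add_sub_cancel_left,
    ← List.append_assoc, List.getElem?_append_left (l₁ := u ++ u) (by simp; omega)]

lemma IsFactorOf.exists_hasCubeAt {α : Type*} {u : List α} {w : ℕ → α}
    (h : IsFactorOf (u ++ u ++ u) w) : ∃ i, HasCubeAt w i u.length := by
  obtain ⟨i, hi⟩ := h
  have hw : ∀ k < 3 * u.length, (u ++ u ++ u)[k]? = some (w (i + k)) := fun k hk => by
    rw [hi, List.getElem?_map, List.getElem?_range (by simp; omega)]
    rfl
  refine ⟨i, fun j hj => ?_⟩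
  have := List.getElem?_append_append_self u hj
  rw [hw _ (by omega), hw _ (by omega)] at this
  rwa [Option.some_inj, ← add_assoc, add_right_comm] at this

lemma tm_two_mul (a : ℕ) : tm (2 * a) = tm a := by
  rcases Nat.eq_zero_or_pos a with rfl | ha
  · rfl
  · unfold tm
    rw [Nat.digits_def' one_lt_two (by omega)]
    simp

lemma tm_two_mul_add_one (a : ℕ) : tm (2 * a + 1) = tm a + 1 := by
  unfold tm
  rw [Nat.digits_def' one_lt_two (by omega), Nat.mul_add_mod_self_left,
    Nat.mul_add_div two_pos]
  ext
  simp [Fin.val_add]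
  omega

lemma tm_two_mul_add_one_ne (a : ℕ) : tm (2 * a + 1) ≠ tm (2 * a) := by
  rw [tm_two_mul_add_one, tm_two_mul]
  generalize tm a = x
  revert x
  decide

lemma Fin.apply_add_eq_iff_even_of_succ_ne (f : ℕ → Fin 2) (a k : ℕ)
    (h : ∀ y < k, f (a + y + 1) ≠ f (a + y)) : f (a + k) = f a ↔ Even k := by
  induction k with
  | zero => simp
  | succ k ih =>
    have hne := h k k.lt_succ_self
    rw [Nat.even_add_one, ← ih fun y hy => h y (by omega), ← add_assoc]
    generalize f (a + k + 1) = x at hne ⊢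
    generalize f (a + k) = y at hne ⊢
    generalize f a = z
    revert x y z
    decide

lemma not_hasCubeAt_tm_of_odd {i p : ℕ} (hp : Odd p) : ¬ HasCubeAt tm i p := by
  intro h
  have alternating : ∀ y < p, tm (i + y + 1) ≠ tm (i + y) := by
    intro y hy
    rcases Nat.even_or_odd' (i + y) with ⟨a, ha | ha⟩
    · rw [ha]
      exact tm_two_mul_add_one_ne a
    · -- `i + y` is odd, so `i + y + p` is even and the period transports the pair there
      obtain ⟨c, rfl⟩ := hp
      have h0 := h y (by omega)
      have h1 := h (y + 1) (by omega)
      rw [show i + y + (2 * c + 1) = 2 * (a + c + 1) by omega] at h0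
      rw [show i + (y + 1) + (2 * c + 1) = 2 * (a + c + 1) + 1 by omega, ← add_assoc] at h1
      rw [← h0, ← h1]
      exact tm_two_mul_add_one_ne _
  have hperiod := h 0 (by have := hp.pos; omega)
  rw [add_zero] at hperiod
  exact Nat.not_even_iff_odd.mpr hp
    ((Fin.apply_add_eq_iff_even_of_succ_ne tm i p alternating).mp hperiod)

lemma HasCubeAt.tm_half {i m : ℕ} (h : HasCubeAt tm i (2 * m)) :
    HasCubeAt tm ((i + 1) / 2) m := by
  intro j hj
  have := h (2 * j + i % 2) (by omega)
  rwa [show i + (2 * j + i % 2) = 2 * ((i + 1) / 2 + j) by omega,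
    show 2 * ((i + 1) / 2 + j) + 2 * m = 2 * ((i + 1) / 2 + j + m) by ring,
    tm_two_mul, tm_two_mul] at this

lemma not_hasCubeAt_tm {p : ℕ} (hp : 0 < p) (i : ℕ) : ¬ HasCubeAt tm i p := by
  induction p using Nat.strong_induction_on generalizing i with
  | _ p ih =>
    obtain ⟨m, rfl | rfl⟩ := Nat.even_or_odd' p
    · exact fun h => ih m (by omega) (by omega) _ h.tm_half
    · exact not_hasCubeAt_tm_of_odd (odd_two_mul_add_one m)

theorem stmt_7 (u : List (Fin 2)) (hu : u ≠ []) :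
    ¬ IsFactorOf (u ++ u ++ u) tm := fun h =>
  let ⟨i, hi⟩ := h.exists_hasCubeAt
  not_hasCubeAt_tm (List.length_pos_iff.mpr hu) i hi
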